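/- Let G be a simple graph on n ≥ 2 vertices with adjacency matrix A(G). Then every eigenvalue λ of A(G) satisfies λ ≥ −1 − √((n − 1 − δ(G))·(n − 1 − δ²(G))), where δ(G) is the minimum degree and δ²(G) is the second-smallest degree of G. (This is the shifted Brauer bound at shift x = 1, a bound in terms of the 'bottom two' degrees of the graph.) -/

import Mathlib

/-!
With `Ā` the adjacency matrix of the complement, `I + A + Ā = J`, so an eigenvector `x` of `A`
for `μ` gives `(μ + 1) ‖x‖² + xᵀĀx = (∑ xᵢ)² ≥ 0`. The Rayleigh quotient of `Ā` is at most its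
largest eigenvalue, and a Brauer-type argument on the two largest coordinates of an eigenvector
bounds every eigenvalue `ν` of a nonnegative zero-diagonal matrix by `ν² ≤ rᵤ r_v` for two
distinct row sums. The row sums of `Ā` are `n - 1 - deg`, and any two of them multiply to at most
`(n - 1 - δ)(n - 1 - δ²)`.
-/

/-- The second-smallest degree `δ²(G) = min_{i≠j} max(deg i, deg j)` of a graph. -/
noncomputable def secondMinDegree (n : ℕ) (G : SimpleGraph (Fin n)) [DecidableRel G.Adj] : ℕ :=
  ⨅ p : {p : Fin n × Fin n // p.1 ≠ p.2}, max (G.degree p.1.1) (G.degree p.1.2)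

open Matrix Finset

namespace Matrix

theorem exists_mulVec_eq_smul_of_mem_spectrum {ι K : Type*} [Fintype ι] [DecidableEq ι]
    [Field K] {M : Matrix ι ι K} {μ : K} (hμ : μ ∈ spectrum K M) : ∃ x ≠ 0, M *ᵥ x = μ • x := by
  rw [← spectrum_toLin', ← Module.End.hasEigenvalue_iff_mem_spectrum] at hμ
  obtain ⟨x, hx⟩ := hμ.exists_hasEigenvector
  exact ⟨x, hx.2, by simpa using hx.apply_eq_smul⟩

variable {ι : Type*} [Fintype ι]

theorem IsHermitian.dotProduct_mulVec_le [DecidableEq ι] {B : Matrix ι ι ℝ} (hB : B.IsHermitian)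
    {c : ℝ} (hc : ∀ ν ∈ spectrum ℝ B, ν ≤ c) (x : ι → ℝ) : x ⬝ᵥ B *ᵥ x ≤ c * (x ⬝ᵥ x) := by
  have hpsd : (algebraMap ℝ _ c - B).PosSemidef := by
    refine posSemidef_iff_isHermitian_and_spectrum_nonneg.2 ⟨(isHermitian_diagonal _).sub hB, ?_⟩
    rw [← spectrum.singleton_sub_eq]
    rintro _ ⟨_, rfl, ν, hν, rfl⟩
    exact sub_nonneg.2 (hc ν hν)
  simpa only [star_trivial, Algebra.algebraMap_eq_smul_one, sub_mulVec, smul_mulVec, one_mulVec,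
    dotProduct_sub, dotProduct_smul, smul_eq_mul, sub_nonneg] using hpsd.dotProduct_mulVec_nonneg x

theorem abs_mulVec_apply_le_of_diag_eq_zero {B : Matrix ι ι ℝ} (hB : ∀ i j, 0 ≤ B i j) {u : ι}
    (hu : B u u = 0) {y : ι → ℝ} {m : ℝ} (hm : ∀ w ≠ u, |y w| ≤ m) :
    |(B *ᵥ y) u| ≤ (∑ w, B u w) * m := by
  calc |∑ w, B u w * y w| ≤ ∑ w, B u w * |y w| := by
        refine (abs_sum_le_sum_abs _ _).trans_eq (sum_congr rfl fun w _ => ?_)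
        rw [abs_mul, abs_of_nonneg (hB u w)]
    _ ≤ ∑ w, B u w * m := by
        refine sum_le_sum fun w _ => ?_
        obtain rfl | hw := eq_or_ne w u
        · simp [hu]
        · exact mul_le_mul_of_nonneg_left (hm w hw) (hB u w)
    _ = (∑ w, B u w) * m := by rw [sum_mul]

/-- Take `u` with `|y u|` largest and `v ≠ u` with `|y v|` largest among the rest; since the
diagonal vanishes, row `u` of `B y = ν y` only sees coordinates bounded by `|y v|`. -/
theorem exists_ne_sq_le_sum_mul_sum [Nontrivial ι] {B : Matrix ι ι ℝ} (hB : ∀ i j, 0 ≤ B i j)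
    (hdiag : ∀ i, B i i = 0) {ν : ℝ} {y : ι → ℝ} (hy : y ≠ 0) (hBy : B *ᵥ y = ν • y) :
    ∃ u v, u ≠ v ∧ ν ^ 2 ≤ (∑ w, B u w) * (∑ w, B v w) := by
  classical
  obtain ⟨u, -, hu⟩ := exists_max_image univ (|y ·|) univ_nonempty
  obtain ⟨v, hv, hvmax⟩ := exists_max_image (univ.erase u) (|y ·|) univ_nontrivial.erase_nonempty
  have hyu : 0 < |y u| := by
    obtain ⟨i, hi⟩ := Function.ne_iff.1 hy
    exact (abs_pos.2 hi).trans_le (hu i (mem_univ i))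
  have habs : ∀ i, |(B *ᵥ y) i| = |ν| * |y i| := fun i => by
    rw [hBy, Pi.smul_apply, smul_eq_mul, abs_mul]
  have hrow_u : |ν| * |y u| ≤ (∑ w, B u w) * |y v| := by
    rw [← habs]
    exact abs_mulVec_apply_le_of_diag_eq_zero hB (hdiag u)
      fun w hw => hvmax w (mem_erase.2 ⟨hw, mem_univ w⟩)
  have hrow_v : |ν| * |y v| ≤ (∑ w, B v w) * |y u| := by
    rw [← habs]
    exact abs_mulVec_apply_le_of_diag_eq_zero hB (hdiag v) fun w _ => hu w (mem_univ w)
  refine ⟨u, v, (ne_of_mem_erase hv).symm, le_of_mul_le_mul_right ?_ hyu⟩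
  have hsum_u : 0 ≤ ∑ w, B u w := sum_nonneg fun w _ => hB u w
  calc ν ^ 2 * |y u| = |ν| * (|ν| * |y u|) := by rw [← sq_abs]; ring
    _ ≤ |ν| * ((∑ w, B u w) * |y v|) := by gcongr
    _ = (∑ w, B u w) * (|ν| * |y v|) := by ring
    _ ≤ (∑ w, B u w) * ((∑ w, B v w) * |y u|) := by gcongr
    _ = _ := by ring

end Matrix

namespace SimpleGraph

section adjMatrix

variable {V α : Type*} (G : SimpleGraph V) [DecidableRel G.Adj]

theorem adjMatrix_nonneg [Semiring α] [PartialOrder α] [ZeroLEOneClass α] (v w : V) :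
    0 ≤ G.adjMatrix α v w := by
  rw [adjMatrix_apply]
  split_ifs <;> simp

variable [Fintype V]

theorem sum_adjMatrix_apply [NonAssocSemiring α] (v : V) : ∑ w, G.adjMatrix α v w = G.degree v := by
  simp [adjMatrix_apply, sum_boole, degree, neighborFinset_eq_filter]

theorem dotProduct_self_add_dotProduct_mulVec_adjMatrix_add_compl [DecidableEq V] [CommRing α]
    (x : V → α) :
    x ⬝ᵥ x + x ⬝ᵥ G.adjMatrix α *ᵥ x + x ⬝ᵥ Gᶜ.adjMatrix α *ᵥ x = (∑ i, x i) ^ 2 := by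
  classical
  have h := congrArg (fun M => x ⬝ᵥ M *ᵥ x) (G.one_add_adjMatrix_add_compl_adjMatrix_eq_of_one α)
  simp only [add_mulVec, dotProduct_add, one_mulVec, compl_adjMatrix_eq_adjMatrix_compl] at h
  rw [h]
  simp [mulVec, dotProduct, sq, sum_mul, mul_comm]

end adjMatrix

variable {n : ℕ} (G : SimpleGraph (Fin n)) [DecidableRel G.Adj] {u v : Fin n}

theorem secondMinDegree_le_max (huv : u ≠ v) :
    secondMinDegree n G ≤ max (G.degree u) (G.degree v) :=
  ciInf_le (OrderBot.bddBelow _) (⟨(u, v), huv⟩ : {p : Fin n × Fin n // p.1 ≠ p.2})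

theorem degree_compl_mul_degree_compl_le (huv : u ≠ v) :
    Gᶜ.degree u * Gᶜ.degree v ≤ (n - 1 - G.minDegree) * (n - 1 - secondMinDegree n G) := by
  wlog h : G.degree u ≤ G.degree v generalizing u v
  · rw [mul_comm]
    exact this huv.symm (by omega)
  have hmax := G.secondMinDegree_le_max huv
  rw [max_eq_right h] at hmax
  simp only [degree_compl, Fintype.card_fin]
  exact Nat.mul_le_mul (Nat.sub_le_sub_left (G.minDegree_le_degree u) _)
    (Nat.sub_le_sub_left hmax _)

theorem cast_degree_compl_mul_degree_compl_le (huv : u ≠ v) :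
    (Gᶜ.degree u : ℝ) * Gᶜ.degree v ≤
      ((n : ℝ) - 1 - G.minDegree) * ((n : ℝ) - 1 - secondMinDegree n G) := by
  have hu := G.degree_lt_card_verts u
  have hv := G.degree_lt_card_verts v
  have hδ := G.minDegree_le_degree u
  have hδ₂ := G.secondMinDegree_le_max huv
  rw [Fintype.card_fin] at hu hv
  have h := G.degree_compl_mul_degree_compl_le huv
  rw [← Nat.cast_le (α := ℝ)] at h
  push_cast [Nat.cast_sub (show 1 ≤ n by omega), Nat.cast_sub (show G.minDegree ≤ n - 1 by omega),
    Nat.cast_sub (show secondMinDegree n G ≤ n - 1 by omega)] at h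
  exact h

end SimpleGraph

/-- Bottom-two-degrees bound (shifted Brauer bound at shift x = 1): every eigenvalue `μ`
of the adjacency matrix of a simple graph on `n ≥ 2` vertices satisfies
`μ ≥ −1 − √((n − 1 − δ(G))(n − 1 − δ²(G)))`. -/
theorem adjacency_bottom_two_degree_bound (n : ℕ) (hn : 2 ≤ n) (G : SimpleGraph (Fin n))
    [DecidableRel G.Adj] (μ : ℝ) (hμ : μ ∈ spectrum ℝ (G.adjMatrix ℝ)) :
    -1 - Real.sqrt (((n : ℝ) - 1 - (G.minDegree : ℝ)) *
      ((n : ℝ) - 1 - (secondMinDegree n G : ℝ))) ≤ μ := by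
  set S := Real.sqrt (((n : ℝ) - 1 - G.minDegree) * ((n : ℝ) - 1 - secondMinDegree n G))
  have : Nontrivial (Fin n) := Fin.nontrivial_iff_two_le.2 hn
  have hspec : ∀ ν ∈ spectrum ℝ (Gᶜ.adjMatrix ℝ), ν ≤ S := by
    intro ν hν
    obtain ⟨y, hy, hBy⟩ := exists_mulVec_eq_smul_of_mem_spectrum hν
    obtain ⟨u, v, huv, hν2⟩ := exists_ne_sq_le_sum_mul_sum Gᶜ.adjMatrix_nonneg
      (fun i => congrFun (Gᶜ.diag_adjMatrix ℝ) i) hy hBy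
    simp only [SimpleGraph.sum_adjMatrix_apply] at hν2
    exact (le_abs_self ν).trans
      (Real.abs_le_sqrt (hν2.trans (G.cast_degree_compl_mul_degree_compl_le huv)))
  obtain ⟨x, hx, hAx⟩ := exists_mulVec_eq_smul_of_mem_spectrum hμ
  have hcompl := (isHermitian_iff_isSymm.2 Gᶜ.isSymm_adjMatrix).dotProduct_mulVec_le hspec x
  have hJ := G.dotProduct_self_add_dotProduct_mulVec_adjMatrix_add_compl x
  rw [hAx, dotProduct_smul, smul_eq_mul] at hJ
  have hxx : 0 < x ⬝ᵥ x := by simpa using dotProduct_star_self_pos_iff.2 hx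
  nlinarith [sq_nonneg (∑ i, x i)]
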